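/- Let β, κ > 0 and α ∈ ℝ, and let ρ : ℝ → ℝ be continuous, 2π-periodic, with ∫_0^{2π} ρ(x) dx = 1. Then ρ is a Kirkwood–Monroe fixed point for the HKB model, i.e. ρ(x) = Z^{−1} exp(−β(α cos(2x) + ∫_0^{2π} (−κ cos(x−y)) ρ(y) dy)) for all x with Z the corresponding normalization constant, if and only if there exists m = (m₁, m₂) ∈ ℝ² such that m₁ = R₁(m), m₂ = R₂(m) (the self-consistency equation m = R(m)) and ρ(x) = ρ_∞(x, m) for all x. Moreover, in that case necessarily m₁ = ∫_0^{2π} cos(y) ρ(y) dy and m₂ = ∫_0^{2π} sin(y) ρ(y) dy. -/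

import Mathlib

open Real MeasureTheory

/-- The HKB normalization constant `Z(m)`. -/
noncomputable def Zhkb (β κ α : ℝ) (m : ℝ × ℝ) : ℝ :=
  ∫ y in (0:ℝ)..(2 * π),
    Real.exp (-β * (α * Real.cos (2 * y) - κ * (m.1 * Real.cos y + m.2 * Real.sin y)))

/-- The HKB candidate stationary density `ρ_∞(x, m)`. -/
noncomputable def rhoInf (β κ α : ℝ) (m : ℝ × ℝ) (x : ℝ) : ℝ :=
  (Zhkb β κ α m)⁻¹ *
    Real.exp (-β * (α * Real.cos (2 * x) - κ * (m.1 * Real.cos x + m.2 * Real.sin x)))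

/-- The HKB self-consistency map `R(m) = (∫ cos·ρ_∞(·,m), ∫ sin·ρ_∞(·,m))`. -/
noncomputable def Rhkb (β κ α : ℝ) (m : ℝ × ℝ) : ℝ × ℝ :=
  (∫ x in (0:ℝ)..(2 * π), Real.cos x * rhoInf β κ α m x,
   ∫ x in (0:ℝ)..(2 * π), Real.sin x * rhoInf β κ α m x)

/-- `ρ` is a Kirkwood–Monroe fixed point for the HKB model with confining potential
`V(x) = α cos(2x)` and interaction kernel `w(x) = −κ cos(x)`. -/
def IsKMhkb (β κ α : ℝ) (ρ : ℝ → ℝ) : Prop :=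
  ∀ x : ℝ, ρ x =
    (∫ y in (0:ℝ)..(2 * π), Real.exp (-β * (α * Real.cos (2 * y)
        + ∫ z in (0:ℝ)..(2 * π), (-κ * Real.cos (y - z)) * ρ z)))⁻¹ *
      Real.exp (-β * (α * Real.cos (2 * x)
        + ∫ y in (0:ℝ)..(2 * π), (-κ * Real.cos (x - y)) * ρ y))

/-! Since `cos (x - y) = cos x cos y + sin x sin y`, the interaction term of the
Kirkwood–Monroe equation depends on `ρ` only through its first Fourier moments
`m(ρ) = (∫ cos · ρ, ∫ sin · ρ)`, so that equation reads `ρ = ρ_∞(·, m(ρ))`. Conversely,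
if `ρ = ρ_∞(·, m)` then `R(m) = m(ρ)`, so `m = R(m)` holds exactly when `m = m(ρ)`. -/

noncomputable def hkbMoment (ρ : ℝ → ℝ) : ℝ × ℝ :=
  (∫ y in (0:ℝ)..(2 * π), Real.cos y * ρ y, ∫ y in (0:ℝ)..(2 * π), Real.sin y * ρ y)

lemma integral_neg_mul_cos_sub_mul {a b : ℝ} (κ : ℝ) {ρ : ℝ → ℝ}
    (hρ : IntervalIntegrable ρ volume a b) (x : ℝ) :
    (∫ y in a..b, (-κ * Real.cos (x - y)) * ρ y)
      = -κ * ((∫ y in a..b, Real.cos y * ρ y) * Real.cos x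
            + (∫ y in a..b, Real.sin y * ρ y) * Real.sin x) := by
  have hcos : IntervalIntegrable (fun y => Real.cos y * ρ y) volume a b :=
    hρ.continuousOn_mul Real.continuous_cos.continuousOn
  have hsin : IntervalIntegrable (fun y => Real.sin y * ρ y) volume a b :=
    hρ.continuousOn_mul Real.continuous_sin.continuousOn
  have hsplit : ∀ y, (-κ * Real.cos (x - y)) * ρ y
      = (-κ * Real.cos x) * (Real.cos y * ρ y) + (-κ * Real.sin x) * (Real.sin y * ρ y) := by
    intro y
    rw [Real.cos_sub]
    ring
  simp_rw [hsplit]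
  rw [intervalIntegral.integral_add (hcos.const_mul _) (hsin.const_mul _),
    intervalIntegral.integral_const_mul, intervalIntegral.integral_const_mul]
  ring

lemma isKMhkb_exponent_eq (β κ α : ℝ) {ρ : ℝ → ℝ} (hρ : IntervalIntegrable ρ volume 0 (2 * π))
    (x : ℝ) :
    -β * (α * Real.cos (2 * x) + ∫ y in (0:ℝ)..(2 * π), (-κ * Real.cos (x - y)) * ρ y)
      = -β * (α * Real.cos (2 * x)
          - κ * ((hkbMoment ρ).1 * Real.cos x + (hkbMoment ρ).2 * Real.sin x)) := by
  rw [integral_neg_mul_cos_sub_mul κ hρ x, hkbMoment]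
  ring

lemma isKMhkb_iff_eq_rhoInf_hkbMoment (β κ α : ℝ) {ρ : ℝ → ℝ}
    (hρ : IntervalIntegrable ρ volume 0 (2 * π)) :
    IsKMhkb β κ α ρ ↔ ∀ x, ρ x = rhoInf β κ α (hkbMoment ρ) x := by
  simp only [IsKMhkb, rhoInf, Zhkb, isKMhkb_exponent_eq β κ α hρ]

lemma Rhkb_eq_hkbMoment {β κ α : ℝ} {m : ℝ × ℝ} {ρ : ℝ → ℝ}
    (hρ : ∀ x, ρ x = rhoInf β κ α m x) : Rhkb β κ α m = hkbMoment ρ := by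
  simp only [Rhkb, hkbMoment, hρ]

theorem stmt8_general (β κ α : ℝ)
    (ρ : ℝ → ℝ) (hρ : Continuous ρ) :
    (IsKMhkb β κ α ρ ↔
      ∃ m : ℝ × ℝ, m = Rhkb β κ α m ∧ ∀ x : ℝ, ρ x = rhoInf β κ α m x) ∧
    (∀ m : ℝ × ℝ, m = Rhkb β κ α m → (∀ x : ℝ, ρ x = rhoInf β κ α m x) →
      m.1 = (∫ y in (0:ℝ)..(2 * π), Real.cos y * ρ y) ∧
      m.2 = (∫ y in (0:ℝ)..(2 * π), Real.sin y * ρ y)) := by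
  have hKM := isKMhkb_iff_eq_rhoInf_hkbMoment β κ α (hρ.intervalIntegrable 0 (2 * π))
  have hfixed : ∀ m, m = Rhkb β κ α m → (∀ x, ρ x = rhoInf β κ α m x) → m = hkbMoment ρ :=
    fun m hm hρm => hm.trans (Rhkb_eq_hkbMoment hρm)
  refine ⟨⟨fun h => ?_, ?_⟩, fun m hm hρm => Prod.ext_iff.mp (hfixed m hm hρm)⟩
  · have hρm := hKM.mp h
    exact ⟨hkbMoment ρ, (Rhkb_eq_hkbMoment hρm).symm, hρm⟩
  · rintro ⟨m, hm, hρm⟩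
    exact hKM.mpr (hfixed m hm hρm ▸ hρm)

/-- A continuous `2π`-periodic probability density `ρ` is a
Kirkwood–Monroe fixed point for the HKB model iff there is an order parameter
`m = (m₁,m₂)` solving the self-consistency equation `m = R(m)` with `ρ = ρ_∞(·,m)`;
moreover in that case `m₁ = ∫ cos·ρ` and `m₂ = ∫ sin·ρ`. -/
theorem stmt8 (β κ α : ℝ) (hβ : 0 < β) (hκ : 0 < κ)
    (ρ : ℝ → ℝ) (hρ : Continuous ρ) (hρper : Function.Periodic ρ (2 * π))
    (hmass : (∫ x in (0:ℝ)..(2 * π), ρ x) = 1) :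
    (IsKMhkb β κ α ρ ↔
      ∃ m : ℝ × ℝ, m = Rhkb β κ α m ∧ ∀ x : ℝ, ρ x = rhoInf β κ α m x) ∧
    (∀ m : ℝ × ℝ, m = Rhkb β κ α m → (∀ x : ℝ, ρ x = rhoInf β κ α m x) →
      m.1 = (∫ y in (0:ℝ)..(2 * π), Real.cos y * ρ y) ∧
      m.2 = (∫ y in (0:ℝ)..(2 * π), Real.sin y * ρ y)) :=
  stmt8_general β κ α ρ hρ
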